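/- Suppose E[‖ξ(X_1)‖_H²] < ∞ and E[M(X_1)] < ∞, and suppose E[g*(X_1)] > 0 where g*(x) = E[h(X_1, x)] / E[M(X_1)]. Then the LBOW betting fractions converge almost surely: λ_t → λ* := E[g*(X_1)] / (E[g*(X_1)] + E[g*(X_1)²]) as t → ∞, and λ* ∈ (0, 1). -/

import Mathlib

/-!
Write `u j = ξ (X (j + 1))` and `w j = M (X (j + 1))`. The payoff `g_{j+1}(X_{j+1})` is
`⟪r j, u j⟫` with `r j = (∑_{k<j} w k)⁻¹ • ∑_{k<j} u k`, and by the strong law `r j` tends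
almost surely to `c = E[M(X₁)]⁻¹ • E[ξ(X₁)]`, for which `g* = ⟪c, ξ ·⟫`. Hence
`⟪r j, u j⟫ - ⟪c, u j⟫ = o(‖u j‖)` and `⟪r j, u j⟫² - ⟪c, u j⟫² = o(‖u j‖²)`; as the Cesàro
means of `‖u j‖` and `‖u j‖²` converge (strong law again), `S_t` and `V_t` have the limits of
the Cesàro means of `g*(X_{j+1})` and `g*(X_{j+1})²`, namely `E g*` and `E g*²`. Finally
`E g*² ≥ (E g*)² > 0` puts `λ*` in `(0, 1)`.
-/

open MeasureTheory ProbabilityTheory Filter Asymptotics Finset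
open scoped RealInnerProductSpace Topology

theorem Finset.sum_Icc_one_eq_sum_range {M : Type*} [AddCommMonoid M] (f : ℕ → M) (n : ℕ) :
    ∑ i ∈ Icc 1 n, f i = ∑ j ∈ range n, f (j + 1) := by
  rw [range_eq_Ico, sum_Ico_add' f 0 n 1, zero_add, Ico_add_one_right_eq_Icc]

noncomputable def cesaroMean {E : Type*} [AddCommGroup E] [Module ℝ E] (u : ℕ → E) (n : ℕ) : E :=
  (n : ℝ)⁻¹ • ∑ i ∈ range n, u i

section Cesaro

variable {E : Type*} [NormedAddCommGroup E] [NormedSpace ℝ E]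

theorem cesaroMean_add (u v : ℕ → E) : cesaroMean (u + v) = cesaroMean u + cesaroMean v := by
  ext n
  simp only [cesaroMean, Pi.add_apply, sum_add_distrib, smul_add]

theorem Filter.Tendsto.cesaroMean_of_isLittleO {u v : ℕ → E} {b : ℕ → ℝ} {l : E} {L : ℝ}
    (hv : Tendsto (cesaroMean v) atTop (𝓝 l)) (huv : (u - v) =o[atTop] b) (hb : 0 ≤ b)
    (hB : Tendsto (cesaroMean b) atTop (𝓝 L)) :
    Tendsto (cesaroMean u) atTop (𝓝 l) := by
  -- `b + 1` has divergent partial sums, as `IsLittleO.sum_range` requires.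
  have hb1 : (u - v) =o[atTop] (b + 1) :=
    huv.trans_isBigO <| IsBigO.of_bound 1 <| Eventually.of_forall fun i => by
      simp [abs_of_nonneg (hb i), abs_of_nonneg (add_nonneg (hb i) zero_le_one)]
  have hdiv : Tendsto (fun n => ∑ i ∈ range n, (b + 1) i) atTop atTop := by
    refine tendsto_atTop_mono (fun n => ?_) tendsto_natCast_atTop_atTop
    simpa using sum_le_sum fun i (_ : i ∈ range n) =>
      (le_add_of_nonneg_left (hb i) : (1 : ℝ) ≤ b i + 1)
  have hsum := hb1.sum_range (fun i => add_nonneg (hb i) zero_le_one) hdiv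
  have hmean : cesaroMean (u - v) =o[atTop] cesaroMean (b + 1) :=
    (isBigO_refl (fun n : ℕ => (n : ℝ)⁻¹) atTop).smul_isLittleO hsum
  have hB1 : Tendsto (cesaroMean (b + 1)) atTop (𝓝 (L + 1)) := by
    rw [cesaroMean_add]
    exact hB.add tendsto_const_nhds.cesaro_smul
  have hzero := (isLittleO_one_iff ℝ).1 (hmean.trans_isBigO (hB1.isBigO_one ℝ))
  have h := hv.add hzero
  rwa [add_zero, ← Pi.add_def, ← cesaroMean_add, add_sub_cancel] at h

theorem tendsto_inv_sum_range_smul_sum_range {u : ℕ → E} {w : ℕ → ℝ} {μ : E} {m : ℝ}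
    (hm : m ≠ 0) (hu : Tendsto (cesaroMean u) atTop (𝓝 μ))
    (hw : Tendsto (cesaroMean w) atTop (𝓝 m)) :
    Tendsto (fun n => (∑ i ∈ range n, w i)⁻¹ • ∑ i ∈ range n, u i) atTop (𝓝 (m⁻¹ • μ)) := by
  refine ((hw.inv₀ hm).smul hu).congr' ?_
  filter_upwards [eventually_ne_atTop 0] with n hn
  have hn' : (n : ℝ) ≠ 0 := Nat.cast_ne_zero.2 hn
  simp only [cesaroMean, smul_eq_mul, mul_inv, inv_inv, smul_smul]
  rw [mul_right_comm, mul_inv_cancel₀ hn', one_mul]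

end Cesaro

section Inner

variable {H : Type*} [NormedAddCommGroup H] [InnerProductSpace ℝ H]

theorem isLittleO_inner_of_tendsto_zero {d : ℕ → H} (hd : Tendsto d atTop (𝓝 0)) (u : ℕ → H) :
    (fun j => ⟪d j, u j⟫) =o[atTop] fun j => ‖u j‖ := by
  have h : (fun j => ‖d j‖ * ‖u j‖) =o[atTop] fun j => (1 : ℝ) * ‖u j‖ :=
    ((isLittleO_one_iff ℝ).2 (by simpa using hd.norm)).mul_isBigO (isBigO_refl _ _)
  refine IsBigO.trans_isLittleO ?_ (by simpa using h)
  exact IsBigO.of_bound 1 <| Eventually.of_forall fun j => by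
    simpa [abs_mul] using abs_real_inner_le_norm (d j) (u j)

theorem isBigO_inner_of_tendsto {r : ℕ → H} {c : H} (hr : Tendsto r atTop (𝓝 c)) (u : ℕ → H) :
    (fun j => ⟪r j, u j⟫) =O[atTop] fun j => ‖u j‖ := by
  have h : (fun j => ‖r j‖ * ‖u j‖) =O[atTop] fun j => (1 : ℝ) * ‖u j‖ :=
    (hr.norm.isBigO_one ℝ).mul (isBigO_refl _ _)
  refine IsBigO.trans ?_ (by simpa using h)
  exact IsBigO.of_bound 1 <| Eventually.of_forall fun j => by
    simpa [abs_mul] using abs_real_inner_le_norm (r j) (u j)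

end Inner

section Lbow

variable {H : Type*} [NormedAddCommGroup H] [InnerProductSpace ℝ H]

/-- With `u j = ξ (X (j + 1))` and `w j = M (X (j + 1))`, `lbowPayoff u w j` is the paper's
`g_{j+1}(X_{j+1})` and `lbowFraction u w t` is its `λ_{t+1}`. -/
noncomputable def lbowPayoff (u : ℕ → H) (w : ℕ → ℝ) (j : ℕ) : ℝ :=
  (∑ k ∈ range j, ⟪u k, u j⟫) / ∑ k ∈ range j, w k

noncomputable def lbowFraction (u : ℕ → H) (w : ℕ → ℝ) (t : ℕ) : ℝ :=
  max 0 (cesaroMean (lbowPayoff u w) t /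
    (cesaroMean (lbowPayoff u w) t + cesaroMean (lbowPayoff u w ^ 2) t))

theorem lbowPayoff_eq_inner (u : ℕ → H) (w : ℕ → ℝ) (j : ℕ) :
    lbowPayoff u w j = ⟪(∑ k ∈ range j, w k)⁻¹ • ∑ k ∈ range j, u k, u j⟫ := by
  rw [lbowPayoff, real_inner_smul_left, sum_inner, div_eq_inv_mul]

variable {u : ℕ → H} {w : ℕ → ℝ} {μ : H} {m a b s v : ℝ}

theorem tendsto_cesaroMean_lbowPayoff (hm : m ≠ 0) (hu : Tendsto (cesaroMean u) atTop (𝓝 μ))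
    (hw : Tendsto (cesaroMean w) atTop (𝓝 m))
    (hnorm : Tendsto (cesaroMean fun j => ‖u j‖) atTop (𝓝 a))
    (hs : Tendsto (cesaroMean fun j => ⟪m⁻¹ • μ, u j⟫) atTop (𝓝 s)) :
    Tendsto (cesaroMean (lbowPayoff u w)) atTop (𝓝 s) := by
  have hr := tendsto_inv_sum_range_smul_sum_range hm hu hw
  refine hs.cesaroMean_of_isLittleO ?_ (fun j => norm_nonneg (u j)) hnorm
  refine (isLittleO_inner_of_tendsto_zero (tendsto_sub_nhds_zero_iff.2 hr) u).congr_left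
    fun j => ?_
  rw [Pi.sub_apply, lbowPayoff_eq_inner, inner_sub_left]

theorem tendsto_cesaroMean_lbowPayoff_sq (hm : m ≠ 0) (hu : Tendsto (cesaroMean u) atTop (𝓝 μ))
    (hw : Tendsto (cesaroMean w) atTop (𝓝 m))
    (hnormsq : Tendsto (cesaroMean fun j => ‖u j‖ ^ 2) atTop (𝓝 b))
    (hv : Tendsto (cesaroMean fun j => ⟪m⁻¹ • μ, u j⟫ ^ 2) atTop (𝓝 v)) :
    Tendsto (cesaroMean (lbowPayoff u w ^ 2)) atTop (𝓝 v) := by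
  have hr := tendsto_inv_sum_range_smul_sum_range hm hu hw
  refine hv.cesaroMean_of_isLittleO ?_ (fun j => sq_nonneg ‖u j‖) hnormsq
  refine ((isLittleO_inner_of_tendsto_zero (tendsto_sub_nhds_zero_iff.2 hr) u).mul_isBigO
    (isBigO_inner_of_tendsto (hr.add_const (m⁻¹ • μ)) u)).congr (fun j => ?_) fun j => (sq _).symm
  rw [Pi.sub_apply, Pi.pow_apply, lbowPayoff_eq_inner, inner_sub_left, inner_add_left]
  ring

theorem tendsto_lbowFraction (hm : m ≠ 0) (hu : Tendsto (cesaroMean u) atTop (𝓝 μ))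
    (hw : Tendsto (cesaroMean w) atTop (𝓝 m))
    (hnorm : Tendsto (cesaroMean fun j => ‖u j‖) atTop (𝓝 a))
    (hnormsq : Tendsto (cesaroMean fun j => ‖u j‖ ^ 2) atTop (𝓝 b))
    (hs : Tendsto (cesaroMean fun j => ⟪m⁻¹ • μ, u j⟫) atTop (𝓝 s))
    (hv : Tendsto (cesaroMean fun j => ⟪m⁻¹ • μ, u j⟫ ^ 2) atTop (𝓝 v))
    (hs_pos : 0 < s) (hv_nonneg : 0 ≤ v) :
    Tendsto (lbowFraction u w) atTop (𝓝 (s / (s + v))) := by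
  have hS := tendsto_cesaroMean_lbowPayoff hm hu hw hnorm hs
  have hV := tendsto_cesaroMean_lbowPayoff_sq hm hu hw hnormsq hv
  have h := (tendsto_const_nhds (x := (0 : ℝ))).max (hS.div (hS.add hV) (by positivity))
  rwa [max_eq_right (by positivity)] at h

theorem lbowFraction_eq {𝒳 : Type*} {x : ℕ → 𝒳} {ξ : 𝒳 → H} {M : 𝒳 → ℝ}
    {g : ℕ → 𝒳 → ℝ}
    (hg : ∀ t y, g t y =
      (∑ i ∈ Icc 1 (t - 1), ⟪ξ (x i), ξ y⟫) / ∑ i ∈ Icc 1 (t - 1), M (x i)) (t : ℕ) :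
    lbowFraction (fun j => ξ (x (j + 1))) (fun j => M (x (j + 1))) t =
      max 0 (((1 / (t : ℝ)) * ∑ i ∈ Icc 1 t, g i (x i)) /
        ((1 / (t : ℝ)) * ∑ i ∈ Icc 1 t, g i (x i) +
          (1 / (t : ℝ)) * ∑ i ∈ Icc 1 t, (g i (x i)) ^ 2)) := by
  have hpay : ∀ j, g (j + 1) (x (j + 1)) =
      lbowPayoff (fun j => ξ (x (j + 1))) (fun j => M (x (j + 1))) j := fun j => by
    rw [hg, Nat.add_sub_cancel, sum_Icc_one_eq_sum_range, sum_Icc_one_eq_sum_range, lbowPayoff]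
  simp only [lbowFraction, cesaroMean, one_div, smul_eq_mul, Pi.pow_apply,
    sum_Icc_one_eq_sum_range, hpay]

end Lbow

theorem ae_tendsto_cesaroMean_comp {Ω 𝒳 E : Type*} {mΩ : MeasurableSpace Ω}
    {m𝒳 : MeasurableSpace 𝒳} {P : Measure Ω} [NormedAddCommGroup E] [NormedSpace ℝ E]
    [CompleteSpace E] [MeasurableSpace E] [BorelSpace E] {Y : ℕ → Ω → 𝒳}
    (hindep : Pairwise fun i j => IndepFun (Y i) (Y j) P)
    (hident : ∀ i, IdentDistrib (Y i) (Y 0) P P) {F : 𝒳 → E} (hF : Measurable F)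
    (hint : Integrable (fun ω => F (Y 0 ω)) P) :
    ∀ᵐ ω ∂P, Tendsto (cesaroMean fun i => F (Y i ω)) atTop (𝓝 (∫ ω, F (Y 0 ω) ∂P)) :=
  strong_law_ae (fun i ω => F (Y i ω)) hint (fun _ _ hij => (hindep hij).comp hF hF)
    fun i => (hident i).comp hF

theorem integral_inner_div_eq_inner_inv_smul {Ω H : Type*} {mΩ : MeasurableSpace Ω}
    {P : Measure Ω} [NormedAddCommGroup H] [InnerProductSpace ℝ H] [CompleteSpace H]
    {f : Ω → H} (hf : Integrable f P) (y : H) (m : ℝ) :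
    (∫ ω, ⟪f ω, y⟫ ∂P) / m = ⟪m⁻¹ • ∫ ω, f ω ∂P, y⟫ := by
  rw [real_inner_smul_left, real_inner_comm, ← integral_inner hf, div_eq_inv_mul]
  simp_rw [real_inner_comm y]

theorem integral_div_add_integral_sq_mem_Ioo {Ω : Type*} {mΩ : MeasurableSpace Ω}
    {P : Measure Ω} [IsProbabilityMeasure P] {G : Ω → ℝ} (hG : MemLp G 2 P)
    (hpos : 0 < ∫ ω, G ω ∂P) :
    (∫ ω, G ω ∂P) / ((∫ ω, G ω ∂P) + ∫ ω, G ω ^ 2 ∂P) ∈ Set.Ioo 0 1 := by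
  have hsq : (∫ ω, G ω ∂P) ^ 2 ≤ ∫ ω, G ω ^ 2 ∂P := by
    have h := variance_nonneg G P
    rwa [variance_eq_sub hG, sub_nonneg] at h
  have hv : 0 < ∫ ω, G ω ^ 2 ∂P := (pow_pos hpos 2).trans_le hsq
  exact ⟨div_pos hpos (by positivity), (div_lt_one (by positivity)).2 (by linarith)⟩

theorem lbow_fraction_convergence_general
    {Ω : Type*} {mΩ : MeasurableSpace Ω} {P : Measure Ω} [IsProbabilityMeasure P]
    {𝒳 : Type*} {m𝒳 : MeasurableSpace 𝒳}
    (X : ℕ → Ω → 𝒳) (hXmeas : ∀ i, Measurable (X i))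
    (hXindep : iIndepFun (m := fun _ => m𝒳) X P)
    (hXident : ∀ i, Measure.map (X i) P = Measure.map (X 1) P)
    {H : Type*} [NormedAddCommGroup H] [InnerProductSpace ℝ H] [CompleteSpace H]
    (ξ : 𝒳 → H) (hξ : StronglyMeasurable ξ)
    (M : 𝒳 → ℝ) (hMmeas : Measurable M) (hMpos : ∀ x, 0 < M x)
    (g : ℕ → Ω → 𝒳 → ℝ)
    (hg : ∀ t ω x, g t ω x =
      (∑ i ∈ Finset.Icc 1 (t - 1), ⟪ξ (X i ω), ξ x⟫) /
        (∑ i ∈ Finset.Icc 1 (t - 1), M (X i ω)))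
    (lam : ℕ → Ω → ℝ)
    (hlam_rec : ∀ t : ℕ, 1 ≤ t → ∀ ω,
      lam (t + 1) ω = max 0
        (((1 / (t : ℝ)) * ∑ i ∈ Finset.Icc 1 t, g i ω (X i ω)) /
          ((1 / (t : ℝ)) * ∑ i ∈ Finset.Icc 1 t, g i ω (X i ω) +
            (1 / (t : ℝ)) * ∑ i ∈ Finset.Icc 1 t, (g i ω (X i ω)) ^ 2)))
    (hnormsq_int : Integrable (fun ω => ‖ξ (X 1 ω)‖ ^ 2) P)
    (hM_int : Integrable (fun ω => M (X 1 ω)) P)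
    (gstar : 𝒳 → ℝ)
    (hgstar : ∀ x, gstar x = (∫ ω, ⟪ξ (X 1 ω), ξ x⟫ ∂P) / ∫ ω, M (X 1 ω) ∂P)
    (hpos : 0 < ∫ ω, gstar (X 1 ω) ∂P) :
    (∀ᵐ ω ∂P, Tendsto (fun t : ℕ => lam t ω) atTop
        (𝓝 ((∫ ω', gstar (X 1 ω') ∂P) /
          ((∫ ω', gstar (X 1 ω') ∂P) + ∫ ω', (gstar (X 1 ω')) ^ 2 ∂P)))) ∧
      (∫ ω', gstar (X 1 ω') ∂P) /
          ((∫ ω', gstar (X 1 ω') ∂P) + ∫ ω', (gstar (X 1 ω')) ^ 2 ∂P) ∈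
        Set.Ioo (0 : ℝ) 1 := by
  borelize H
  set Y : ℕ → Ω → 𝒳 := fun i => X (i + 1)
  have hindep : Pairwise fun i j => IndepFun (Y i) (Y j) P :=
    fun i j hij => hXindep.indepFun (by simpa using hij)
  have hident : ∀ i, IdentDistrib (Y i) (Y 0) P P :=
    fun i => ⟨(hXmeas _).aemeasurable, (hXmeas 1).aemeasurable, hXident _⟩
  have hξm : Measurable ξ := hξ.measurable
  have hξL2 : MemLp (fun ω => ξ (X 1 ω)) 2 P := (memLp_two_iff_integrable_sq_norm
    (hξ.comp_measurable (hXmeas 1)).aestronglyMeasurable).2 hnormsq_int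
  have hξint := hξL2.integrable one_le_two
  have hm : 0 < ∫ ω, M (X 1 ω) ∂P := by
    rw [integral_pos_iff_support_of_nonneg (fun ω => (hMpos _).le) hM_int]
    simp [Function.support, (hMpos _).ne']
  set c := (∫ ω, M (X 1 ω) ∂P)⁻¹ • ∫ ω, ξ (X 1 ω) ∂P
  obtain rfl : gstar = fun x => ⟪c, ξ x⟫ :=
    funext fun x => (hgstar x).trans (integral_inner_div_eq_inner_inv_smul hξint _ _)
  have hgL2 := hξL2.const_inner (𝕜 := ℝ) c
  have hinner : Measurable fun x => ⟪c, ξ x⟫ :=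
    (continuous_const.inner continuous_id).measurable.comp hξm
  refine ⟨?_, integral_div_add_integral_sq_mem_Ioo hgL2 hpos⟩
  filter_upwards [ae_tendsto_cesaroMean_comp hindep hident hξm hξint,
    ae_tendsto_cesaroMean_comp hindep hident hMmeas hM_int,
    ae_tendsto_cesaroMean_comp hindep hident hξm.norm hξint.norm,
    ae_tendsto_cesaroMean_comp hindep hident (hξm.norm.pow_const 2) hnormsq_int,
    ae_tendsto_cesaroMean_comp hindep hident hinner (hgL2.integrable one_le_two),
    ae_tendsto_cesaroMean_comp hindep hident (hinner.pow_const 2) hgL2.integrable_sq]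
    with ω hu hw hnorm hnormsq hs hv
  rw [← tendsto_add_atTop_iff_nat 1]
  refine (tendsto_lbowFraction hm.ne' hu hw hnorm hnormsq hs hv hpos
    (integral_nonneg fun _ => sq_nonneg _)).congr' ?_
  filter_upwards [eventually_ge_atTop 1] with t ht
  rw [hlam_rec t ht ω, lbowFraction_eq (fun t y => hg t ω y)]

/-- Let `(X_t)_{t ≥ 1}` be i.i.d. `𝒳`-valued random variables, `H` a separable real Hilbert
space, `ξ : 𝒳 → H` strongly measurable, and `h(x, y) = ⟪ξ x, ξ y⟫`. Let `M : 𝒳 → (0, ∞)`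
be measurable with `h(x, y) ≥ -M(x)` for all `x, y`, and define payoffs
`g_t(x) = (∑_{i=1}^{t-1} h(X_i, x)) / (∑_{i=1}^{t-1} M(X_i))` (so `g_1 = 0`). Let the
betting fractions follow LBOW: `λ_1 = 0` and `λ_{t+1} = max(0, S_t / (S_t + V_t))` where
`S_t = (1/t) ∑_{i=1}^t g_i(X_i)` and `V_t = (1/t) ∑_{i=1}^t g_i(X_i)²` (with `λ_{t+1} = 0`
when `S_t + V_t = 0`, which is the junk-value convention of real division). If
`E ‖ξ(X₁)‖² < ∞`, `E M(X₁) < ∞`, and `E[g*(X₁)] > 0` where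
`g*(x) = E[h(X₁, x)] / E[M(X₁)]`, then almost surely
`λ_t → λ* = E[g*(X₁)] / (E[g*(X₁)] + E[g*(X₁)²])`, and `λ* ∈ (0, 1)`. -/
theorem lbow_fraction_convergence
    {Ω : Type*} {mΩ : MeasurableSpace Ω} {P : Measure Ω} [IsProbabilityMeasure P]
    {𝒳 : Type*} {m𝒳 : MeasurableSpace 𝒳}
    (X : ℕ → Ω → 𝒳) (hXmeas : ∀ i, Measurable (X i))
    (hXindep : iIndepFun (m := fun _ => m𝒳) X P)
    (hXident : ∀ i, Measure.map (X i) P = Measure.map (X 1) P)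
    {H : Type*} [NormedAddCommGroup H] [InnerProductSpace ℝ H] [CompleteSpace H]
    [SecondCountableTopology H]
    (ξ : 𝒳 → H) (hξ : StronglyMeasurable ξ)
    (M : 𝒳 → ℝ) (hMmeas : Measurable M) (hMpos : ∀ x, 0 < M x)
    (hMbound : ∀ x y, -(M x) ≤ ⟪ξ x, ξ y⟫)
    (g : ℕ → Ω → 𝒳 → ℝ)
    (hg : ∀ t ω x, g t ω x =
      (∑ i ∈ Finset.Icc 1 (t - 1), ⟪ξ (X i ω), ξ x⟫) /
        (∑ i ∈ Finset.Icc 1 (t - 1), M (X i ω)))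
    (lam : ℕ → Ω → ℝ)
    (hlam1 : ∀ ω, lam 1 ω = 0)
    (hlam_rec : ∀ t : ℕ, 1 ≤ t → ∀ ω,
      lam (t + 1) ω = max 0
        (((1 / (t : ℝ)) * ∑ i ∈ Finset.Icc 1 t, g i ω (X i ω)) /
          ((1 / (t : ℝ)) * ∑ i ∈ Finset.Icc 1 t, g i ω (X i ω) +
            (1 / (t : ℝ)) * ∑ i ∈ Finset.Icc 1 t, (g i ω (X i ω)) ^ 2)))
    (hnormsq_int : Integrable (fun ω => ‖ξ (X 1 ω)‖ ^ 2) P)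
    (hM_int : Integrable (fun ω => M (X 1 ω)) P)
    (gstar : 𝒳 → ℝ)
    (hgstar : ∀ x, gstar x = (∫ ω, ⟪ξ (X 1 ω), ξ x⟫ ∂P) / ∫ ω, M (X 1 ω) ∂P)
    (hpos : 0 < ∫ ω, gstar (X 1 ω) ∂P) :
    (∀ᵐ ω ∂P, Tendsto (fun t : ℕ => lam t ω) atTop
        (𝓝 ((∫ ω', gstar (X 1 ω') ∂P) /
          ((∫ ω', gstar (X 1 ω') ∂P) + ∫ ω', (gstar (X 1 ω')) ^ 2 ∂P)))) ∧
      (∫ ω', gstar (X 1 ω') ∂P) /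
          ((∫ ω', gstar (X 1 ω') ∂P) + ∫ ω', (gstar (X 1 ω')) ^ 2 ∂P) ∈
        Set.Ioo (0 : ℝ) 1 :=
  lbow_fraction_convergence_general (mΩ := mΩ) X hXmeas hXindep hXident ξ hξ M hMmeas hMpos g hg lam
    hlam_rec hnormsq_int hM_int gstar hgstar hpos
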